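/- Assume every leaf of T is a variable node (equivalently, every check node of T has at least one child variable node). Let p ∈ P and let T_p denote the subtree of T consisting of p together with all of its descendants, regarded as a rooted bipartite tree with root p, variable nodes P ∩ T_p and check nodes Q ∩ T_p. Then every minimal deviation x' of T_p extends to a minimal deviation of T: there exists a minimal deviation x of T such that x agrees with x' on every variable node of T_p. -/

import Mathlib

/-!
Let `c` pick, at every check node `q`, a child of `q`, namely the one leading towards `p`
whenever `p` lies below `q` (possible because check nodes are not leaves). Outside `T_p`, put
ones on the root and on every `c q` whose grandparent carries a one, for checks `q ∉ T_p`; inside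
`T_p`, copy `x'`. Every check node outside `T_p` then sees either no ones or exactly two, its
parent and `c q`, and the ones reach down to `p`.

If `y` is a nonzero codeword covered by this `x`, the parity check at each such `q` forces
`y (parent q) = y (c q)`, so `y` is constant on the ones outside `T_p`, with value `y p`. The
restriction of `y` to `T_p` is a codeword covered by `x'`; it is nonzero (otherwise `y p = 0`
and `y = 0`), hence equal to `x'` by minimality, so `y p = 1` and `y = x`.
-/

open SimpleGraph Finset

/-- In the tree `T` rooted at `n`, `v` is a child of `u`. -/
def IsChild {V : Type} (T : SimpleGraph V) (n u v : V) : Prop :=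
  T.Adj u v ∧ T.dist v n = T.dist u n + 1

/-- The descendants of `p` in the tree `T` rooted at `n`: the vertices whose path to
the root `n` passes through `p` (this includes `p` itself).  In a tree this is
equivalent to the distance condition below. -/
def Descendants {V : Type} (T : SimpleGraph V) (n p : V) : Set V :=
  {v | T.dist v n = T.dist v p + T.dist p n}

/-- A codeword of the subtree of `T` with vertex set `S` and variable nodes `P ∩ S`:
a map vanishing outside `P ∩ S` such that, at every check node of `S`, the sum of the
values of its variable neighbors in `S` is `0` in `ZMod 2` (values of neighbors
outside `S` being `0`, the sum may be taken over all neighbors). -/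
def IsCodewordOn {V : Type} (T : SimpleGraph V) [Fintype V] [DecidableRel T.Adj]
    (P S : Set V) (x : V → ZMod 2) : Prop :=
  (∀ v, ¬(v ∈ P ∧ v ∈ S) → x v = 0) ∧
  ∀ q ∈ S, q ∉ P → ∑ u ∈ T.neighborFinset q, x u = 0

/-- `x` covers `y` on the variable nodes of `S`. -/
def CoversOn {V : Type} (P S : Set V) (x y : V → ZMod 2) : Prop :=
  ∀ v, v ∈ P → v ∈ S → y v = 1 → x v = 1

/-- A minimal deviation of the subtree with vertex set `S` rooted at `r`: a codeword
`x` with `x r = 1` such that the only nonzero codeword covered by `x` is `x` itself. -/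
def IsMinimalDeviationOn {V : Type} (T : SimpleGraph V) [Fintype V]
    [DecidableRel T.Adj] (P S : Set V) (r : V) (x : V → ZMod 2) : Prop :=
  IsCodewordOn T P S x ∧ x r = 1 ∧
  ∀ y, IsCodewordOn T P S y → CoversOn P S x y → y ≠ 0 → y = x

variable {V : Type} {T : SimpleGraph V} {n p : V}

theorem SimpleGraph.Connected.exists_adj_dist_add_one_eq (hc : T.Connected) {a t : V}
    (h : a ≠ t) : ∃ u, T.Adj a u ∧ T.dist u t + 1 = T.dist a t := by
  obtain ⟨w, hw⟩ := hc.exists_walk_length_eq_dist a t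
  cases w with
  | nil => exact absurd rfl h
  | @cons _ u _ hadj q =>
    refine ⟨_, hadj, le_antisymm ?_ ?_⟩
    · have := dist_le q
      simp only [Walk.length_cons] at hw
      omega
    · have := hc.dist_triangle (u := a) (v := u) (w := t)
      rwa [dist_eq_one_iff_adj.mpr hadj, add_comm] at this

theorem SimpleGraph.IsTree.eq_of_adj_dist_add_one_eq (hT : T.IsTree) {a t u₁ u₂ : V}
    (h₁ : T.Adj a u₁) (hd₁ : T.dist u₁ t + 1 = T.dist a t)
    (h₂ : T.Adj a u₂) (hd₂ : T.dist u₂ t + 1 = T.dist a t) : u₁ = u₂ := by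
  have geodesic : ∀ u (h : T.Adj a u), T.dist u t + 1 = T.dist a t →
      ∃ w : T.Walk a t, w.IsPath ∧ w.snd = u := by
    intro u h hd
    obtain ⟨q, hq⟩ := hT.connected.exists_walk_length_eq_dist u t
    exact ⟨.cons h q, (Walk.cons h q).isPath_of_length_eq_dist (by simp [hq, hd]), by simp⟩
  obtain ⟨w₁, hw₁, rfl⟩ := geodesic u₁ h₁ hd₁
  obtain ⟨w₂, hw₂, rfl⟩ := geodesic u₂ h₂ hd₂
  obtain rfl : w₁ = w₂ :=
    congrArg Subtype.val ((hT.isAcyclic.subsingleton_path a t).elim ⟨w₁, hw₁⟩ ⟨w₂, hw₂⟩)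
  rfl

theorem IsChild.ne_root {u v : V} (h : IsChild T n u v) : v ≠ n := by
  rintro rfl
  simpa using h.2

theorem IsChild.left_unique (hT : T.IsTree) {u u' v : V} (h : IsChild T n u v)
    (h' : IsChild T n u' v) : u = u' :=
  hT.eq_of_adj_dist_add_one_eq h.1.symm h.2.symm h'.1.symm h'.2.symm

theorem exists_isChild_of_ne_root (hc : T.Connected) {v : V} (hv : v ≠ n) :
    ∃ u, IsChild T n u v := by
  obtain ⟨u, hadj, hd⟩ := hc.exists_adj_dist_add_one_eq hv
  exact ⟨u, hadj.symm, hd.symm⟩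

theorem isChild_or_isChild_of_adj (hT : T.IsTree) {u v : V} (h : T.Adj u v) :
    IsChild T n u v ∨ IsChild T n v u := by
  have hd := hT.dist_eq_dist_add_one_of_adj n h
  rw [dist_comm, dist_comm (u := n)] at hd
  exact hd.symm.imp (⟨h, ·⟩) (⟨h.symm, ·⟩)

theorem mem_descendants_iff {v : V} :
    v ∈ Descendants T n p ↔ T.dist v n = T.dist v p + T.dist p n :=
  Iff.rfl

theorem mem_descendants_self : p ∈ Descendants T n p := by
  simp [Descendants]

theorem mem_descendants_root : p ∈ Descendants T n n := by
  simp [Descendants]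

theorem eq_of_mem_descendants_of_dist_le (hc : T.Connected) {v : V}
    (hv : v ∈ Descendants T n p) (hle : T.dist v n ≤ T.dist p n) : v = p :=
  hc.dist_eq_zero_iff.mp (by simp only [mem_descendants_iff] at hv; omega)

theorem IsChild.mem_descendants (hc : T.Connected) {q w : V} (hw : IsChild T n q w)
    (hq : q ∈ Descendants T n p) : w ∈ Descendants T n p := by
  have h₁ := hc.dist_triangle (u := w) (v := q) (w := p)
  have h₂ := hc.dist_triangle (u := w) (v := p) (w := n)
  have h₃ : T.dist w q = 1 := dist_eq_one_iff_adj.mpr hw.1.symm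
  have h₄ := hw.2
  simp only [mem_descendants_iff] at hq ⊢
  omega

theorem IsChild.parent_mem_descendants (hT : T.IsTree) {u v : V} (h : IsChild T n u v)
    (hv : v ∈ Descendants T n p) (hvp : v ≠ p) : u ∈ Descendants T n p := by
  obtain ⟨u', hadj, hd⟩ := hT.connected.exists_adj_dist_add_one_eq hvp
  have h₁ := hT.connected.dist_triangle (u := u') (v := p) (w := n)
  have h₂ := hT.connected.dist_triangle (u := v) (v := u') (w := n)
  have h₃ : T.dist v u' = 1 := dist_eq_one_iff_adj.mpr hadj
  simp only [mem_descendants_iff] at hv ⊢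
  -- the neighbour of `v` towards `p` is also its neighbour towards `n`
  obtain rfl : u' = u := IsChild.left_unique hT ⟨hadj.symm, by omega⟩ h
  omega

theorem IsChild.not_mem_descendants_or_eq (hT : T.IsTree) {q w : V} (h : IsChild T n q w)
    (hq : q ∉ Descendants T n p) : w ∉ Descendants T n p ∨ w = p := by
  by_cases hw : w ∈ Descendants T n p
  · exact .inr (by_contra fun hwp => hq (h.parent_mem_descendants hT hw hwp))
  · exact .inl hw

theorem exists_isChild_mem_descendants (hc : T.Connected) {u : V}
    (h : p ∈ Descendants T n u) (hpu : p ≠ u) : ∃ q, IsChild T n u q ∧ p ∈ Descendants T n q := by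
  obtain ⟨q, hadj, hd⟩ := hc.exists_adj_dist_add_one_eq hpu.symm
  have h₁ := hc.dist_triangle (u := q) (v := u) (w := n)
  have h₂ := hc.dist_triangle (u := p) (v := q) (w := n)
  have h₃ : T.dist q u = 1 := dist_eq_one_iff_adj.mpr hadj.symm
  have h₄ : T.dist p q = T.dist q p := dist_comm
  have h₅ : T.dist p u = T.dist u p := dist_comm
  simp only [mem_descendants_iff] at h ⊢
  exact ⟨q, ⟨hadj, by omega⟩, by omega⟩

theorem mem_descendants_of_adj (hT : T.IsTree) {q w : V} (hq : q ∈ Descendants T n p)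
    (hqp : q ≠ p) (h : T.Adj q w) : w ∈ Descendants T n p :=
  (isChild_or_isChild_of_adj hT h).elim (·.mem_descendants hT.connected hq)
    (·.parent_mem_descendants hT hq hqp)

section Codewords

variable [Fintype V] [DecidableRel T.Adj] {P S : Set V} {x y : V → ZMod 2}

theorem CoversOn.apply_eq_zero (hcov : CoversOn P S x y) (hy : IsCodewordOn T P S y) {v : V}
    (hx : x v = 0) : y v = 0 := by
  by_cases hv : v ∈ P ∧ v ∈ S
  · by_contra hyv
    have hyv : y v = 1 := (by decide : ∀ a : ZMod 2, a ≠ 0 → a = 1) _ hyv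
    simp [hcov v hv.1 hv.2 hyv] at hx
  · exact hy.1 v hv

theorem IsCodewordOn.indicator {S' : Set V} (hy : IsCodewordOn T P S' y) (hSS' : S ⊆ S')
    (hS : ∀ q ∈ S, q ∉ P → ∀ w, T.Adj q w → w ∈ S) : IsCodewordOn T P S (S.indicator y) := by
  refine ⟨fun v hv => ?_, fun q hq hqP => ?_⟩
  · by_cases hvS : v ∈ S
    · rw [Set.indicator_of_mem hvS]
      exact hy.1 v fun h => hv ⟨h.1, hvS⟩
    · exact Set.indicator_of_notMem hvS y
  · rw [← hy.2 q (hSS' hq) hqP]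
    exact Finset.sum_congr rfl fun w hw =>
      Set.indicator_of_mem (hS q hq hqP w ((mem_neighborFinset _ _ _).1 hw)) y

end Codewords

namespace DeviationExtension

variable {P : Set V} {c : V → V} {x' : V → ZMod 2}

def IsChildChoice (T : SimpleGraph V) (P : Set V) (n p : V) (c : V → V) : Prop :=
  ∀ q ∉ P, IsChild T n q (c q) ∧ (p ∈ Descendants T n q → p ∈ Descendants T n (c q))

theorem exists_isChildChoice (hc : T.Connected) (hleaf : ∀ q, q ∉ P → ∃ v, IsChild T n q v)
    (hp : p ∈ P) : ∃ c, IsChildChoice T P n p c := by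
  have : ∀ q, ∃ w, q ∉ P →
      IsChild T n q w ∧ (p ∈ Descendants T n q → p ∈ Descendants T n w) := by
    intro q
    by_cases hqP : q ∈ P
    · exact ⟨q, absurd hqP⟩
    by_cases hpq : p ∈ Descendants T n q
    · obtain ⟨w, hw, hpw⟩ := exists_isChild_mem_descendants hc hpq
        (ne_of_mem_of_not_mem hp hqP)
      exact ⟨w, fun _ => ⟨hw, fun _ => hpw⟩⟩
    · obtain ⟨w, hw⟩ := hleaf q hqP
      exact ⟨w, fun _ => ⟨hw, (absurd · hpq)⟩⟩
  choose c hc using this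
  exact ⟨c, hc⟩

/-- The ones of the extension outside `T_p`, together with `p`. -/
inductive Marked (T : SimpleGraph V) (P : Set V) (n p : V) (c : V → V) : V → Prop
  | root : Marked T P n p c n
  | step {u q : V} : Marked T P n p c u → IsChild T n u q → q ∉ P → q ∉ Descendants T n p →
      Marked T P n p c (c q)

open Classical in
noncomputable def extension (T : SimpleGraph V) (P : Set V) (n p : V) (c : V → V)
    (x' : V → ZMod 2) (v : V) : ZMod 2 :=
  if v ∈ Descendants T n p then x' v else if Marked T P n p c v then 1 else 0

theorem Marked.mem (hbip : ∀ u v, T.Adj u v → (u ∈ P ↔ v ∉ P)) (hn : n ∈ P)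
    (hc : IsChildChoice T P n p c) {v : V} (h : Marked T P n p c v) : v ∈ P := by
  cases h with
  | root => exact hn
  | step _ _ hqP _ => exact (hbip _ _ (hc _ hqP).1.1.symm).2 hqP

theorem Marked.eq_choice (hT : T.IsTree) (hc : IsChildChoice T P n p c) {u q w : V}
    (h : Marked T P n p c w) (hw : IsChild T n q w) (hq : IsChild T n u q) :
    Marked T P n p c u ∧ w = c q := by
  cases h with
  | root => exact absurd rfl hw.ne_root
  | step hu' hq' hqP _ =>
    obtain rfl := (hc _ hqP).1.left_unique hT hw
    obtain rfl := hq'.left_unique hT hq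
    exact ⟨hu', rfl⟩

theorem marked_choice_iff (hT : T.IsTree) (hc : IsChildChoice T P n p c) {u q : V}
    (hq : IsChild T n u q) (hqP : q ∉ P) (hqp : q ∉ Descendants T n p) :
    Marked T P n p c (c q) ↔ Marked T P n p c u :=
  ⟨fun h => (h.eq_choice hT hc (hc q hqP).1 hq).1, fun h => .step h hq hqP hqp⟩

theorem marked_self (hT : T.IsTree) (hbip : ∀ u v, T.Adj u v → (u ∈ P ↔ v ∉ P)) (hn : n ∈ P)
    (hp : p ∈ P) (hc : IsChildChoice T P n p c) : Marked T P n p c p := by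
  suffices ∀ k u, T.dist p u = k → Marked T P n p c u → u ∈ P → p ∈ Descendants T n u →
      Marked T P n p c p from this _ n rfl .root hn mem_descendants_root
  intro k
  induction k using Nat.strong_induction_on with
  | _ k ih =>
    intro u hk hu huP hpu
    by_cases hup : p = u
    · exact hup ▸ hu
    obtain ⟨q, hq, hpq⟩ := exists_isChild_mem_descendants hT.connected hpu hup
    have hqP : q ∉ P := (hbip u q hq.1).1 huP
    have hqp : q ∉ Descendants T n p := fun h =>
      hqP (eq_of_mem_descendants_of_dist_le hT.connected h
        (by rw [mem_descendants_iff] at hpq; omega) ▸ hp)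
    obtain ⟨hcq, hpcq⟩ := hc q hqP
    have hpcq := hpcq hpq
    refine ih _ ?_ _ rfl (.step hu hq hqP hqp) ((hbip _ _ hcq.1.symm).2 hqP) hpcq
    have := hq.2
    have := hcq.2
    rw [mem_descendants_iff] at hpu hpcq
    omega

open Classical in
theorem extension_eq_ite (hx'p : x' p = 1) (hpm : Marked T P n p c p) {v : V}
    (hv : v ∉ Descendants T n p ∨ v = p) :
    extension T P n p c x' v = if Marked T P n p c v then 1 else 0 := by
  rcases hv with hv | rfl
  · simp [extension, hv]
  · simp [extension, mem_descendants_self, hx'p, hpm]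

theorem extension_of_mem {v : V} (hv : v ∈ Descendants T n p) :
    extension T P n p c x' v = x' v := by
  simp [extension, hv]

theorem extension_root (hc : T.Connected) (hx'p : x' p = 1) (hpm : Marked T P n p c p) :
    extension T P n p c x' n = 1 := by
  have hn : n ∉ Descendants T n p ∨ n = p := or_iff_not_imp_left.2 fun h =>
    eq_of_mem_descendants_of_dist_le hc (not_not.1 h) (by simp)
  rw [extension_eq_ite hx'p hpm hn, if_pos .root]

theorem eq_or_eq_of_extension_ne_zero (hT : T.IsTree) (hc : IsChildChoice T P n p c)
    (hx'p : x' p = 1) (hpm : Marked T P n p c p) {u q w : V} (hq : IsChild T n u q)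
    (hqp : q ∉ Descendants T n p) (hw : T.Adj q w) (hxw : extension T P n p c x' w ≠ 0) :
    w = u ∨ w = c q := by
  rcases isChild_or_isChild_of_adj hT hw with hqw | hwq
  · rw [extension_eq_ite hx'p hpm (hqw.not_mem_descendants_or_eq hT hqp)] at hxw
    have hm : Marked T P n p c w := by_contra fun h => hxw (if_neg h)
    exact .inr (hm.eq_choice hT hc hqw hq).2
  · exact .inl (hwq.left_unique hT hq)

theorem extension_choice_eq (hT : T.IsTree) (hc : IsChildChoice T P n p c) (hx'p : x' p = 1)
    (hpm : Marked T P n p c p) {u q : V} (hq : IsChild T n u q) (hqP : q ∉ P)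
    (hqp : q ∉ Descendants T n p) :
    extension T P n p c x' (c q) = extension T P n p c x' u := by
  have hu : u ∉ Descendants T n p := fun h => hqp (hq.mem_descendants hT.connected h)
  rw [extension_eq_ite hx'p hpm ((hc q hqP).1.not_mem_descendants_or_eq hT hqp),
    extension_eq_ite hx'p hpm (.inl hu), marked_choice_iff hT hc hq hqP hqp]

variable [Fintype V] [DecidableRel T.Adj]

theorem sum_neighborFinset_eq_add (hT : T.IsTree)
    (hc : IsChildChoice T P n p c) (hx'p : x' p = 1) (hpm : Marked T P n p c p) {u q : V}
    (hq : IsChild T n u q) (hqP : q ∉ P) (hqp : q ∉ Descendants T n p) (z : V → ZMod 2)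
    (hz : ∀ w, extension T P n p c x' w = 0 → z w = 0) :
    ∑ w ∈ T.neighborFinset q, z w = z u + z (c q) := by
  have hcq := (hc q hqP).1
  refine Finset.sum_eq_add_of_mem u (c q) (by simpa using hq.1.symm) (by simpa using hcq.1)
    (fun h => ?_) fun w hw hne => hz w (by_contra fun h => ?_)
  · have := hq.2
    have := hcq.2
    rw [← h] at this
    omega
  · rw [mem_neighborFinset] at hw
    exact (eq_or_eq_of_extension_ne_zero hT hc hx'p hpm hq hqp hw h).elim hne.1 hne.2

theorem isCodewordOn_extension (hT : T.IsTree) (hbip : ∀ u v, T.Adj u v → (u ∈ P ↔ v ∉ P))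
    (hn : n ∈ P) (hp : p ∈ P) (hc : IsChildChoice T P n p c) (hpm : Marked T P n p c p)
    (hx' : IsCodewordOn T P (Descendants T n p) x') (hx'p : x' p = 1) :
    IsCodewordOn T P Set.univ (extension T P n p c x') := by
  refine ⟨fun v hv => ?_, fun q _ hqP => ?_⟩
  · have hvP : v ∉ P := fun h => hv ⟨h, Set.mem_univ v⟩
    by_cases hvp : v ∈ Descendants T n p
    · rw [extension_of_mem hvp]
      exact hx'.1 v fun h => hvP h.1
    · rw [extension_eq_ite hx'p hpm (.inl hvp), if_neg fun h => hvP (h.mem hbip hn hc)]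
  by_cases hqp : q ∈ Descendants T n p
  · rw [← hx'.2 q hqp hqP]
    exact Finset.sum_congr rfl fun w hw => extension_of_mem <| mem_descendants_of_adj hT hqp
      ((ne_of_mem_of_not_mem hp hqP).symm) ((mem_neighborFinset _ _ _).1 hw)
  · obtain ⟨u, hu⟩ := exists_isChild_of_ne_root hT.connected (ne_of_mem_of_not_mem hn hqP).symm
    rw [sum_neighborFinset_eq_add hT hc hx'p hpm hu hqP hqp _ fun _ => id,
      extension_choice_eq hT hc hx'p hpm hu hqP hqp]
    exact CharTwo.add_self_eq_zero _

theorem Marked.apply_eq_root (hT : T.IsTree) (hc : IsChildChoice T P n p c) (hx'p : x' p = 1)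
    (hpm : Marked T P n p c p) {y : V → ZMod 2} (hy : IsCodewordOn T P Set.univ y)
    (hzero : ∀ w, extension T P n p c x' w = 0 → y w = 0) {v : V} (h : Marked T P n p c v) :
    y v = y n := by
  induction h with
  | root => rfl
  | step _ hq hqP hqp ih =>
    have hsum := hy.2 _ (Set.mem_univ _) hqP
    rw [sum_neighborFinset_eq_add hT hc hx'p hpm hq hqP hqp y hzero, CharTwo.add_eq_zero] at hsum
    rw [← hsum, ih]

theorem eq_extension_of_covers (hT : T.IsTree) (hp : p ∈ P) (hc : IsChildChoice T P n p c)
    (hpm : Marked T P n p c p) (hx' : IsMinimalDeviationOn T P (Descendants T n p) p x')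
    {y : V → ZMod 2} (hy : IsCodewordOn T P Set.univ y)
    (hcov : CoversOn P Set.univ (extension T P n p c x') y) (hy0 : y ≠ 0) :
    y = extension T P n p c x' := by
  obtain ⟨-, hx'p, hmin⟩ := hx'
  have hzero : ∀ w, extension T P n p c x' w = 0 → y w = 0 := fun _ => hcov.apply_eq_zero hy
  have hout : ∀ v ∉ Descendants T n p, y v = y p * extension T P n p c x' v := by
    intro v hv
    by_cases hm : Marked T P n p c v
    · rw [extension_eq_ite hx'p hpm (.inl hv), if_pos hm, mul_one,
        Marked.apply_eq_root hT hc hx'p hpm hy hzero hm,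
        Marked.apply_eq_root hT hc hx'p hpm hy hzero hpm]
    · have hv0 : extension T P n p c x' v = 0 := by
        rw [extension_eq_ite hx'p hpm (.inl hv), if_neg hm]
      rw [hv0, mul_zero, hzero v hv0]
  set y₁ := (Descendants T n p).indicator y
  have hcw₁ : IsCodewordOn T P (Descendants T n p) y₁ :=
    hy.indicator (Set.subset_univ _) fun q hq hqP _ =>
      mem_descendants_of_adj hT hq (ne_of_mem_of_not_mem hp hqP).symm
  have hyy₁ : ∀ v ∈ Descendants T n p, y v = y₁ v := fun v hv => (Set.indicator_of_mem hv y).symm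
  have hcov₁ : CoversOn P (Descendants T n p) x' y₁ := fun v hvP hv h1 => by
    rw [← extension_of_mem (P := P) (c := c) (x' := x') hv]
    exact hcov v hvP trivial ((hyy₁ v hv).trans h1)
  have hxy₁ : y₁ = x' := hmin y₁ hcw₁ hcov₁ fun h0 => hy0 <| funext fun v => by
    have hyp0 : y p = 0 := by rw [hyy₁ p mem_descendants_self, h0, Pi.zero_apply]
    by_cases hv : v ∈ Descendants T n p
    · rw [hyy₁ v hv, h0]
    · rw [hout v hv, hyp0, zero_mul, Pi.zero_apply]
  funext v
  by_cases hv : v ∈ Descendants T n p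
  · rw [hyy₁ v hv, hxy₁, extension_of_mem hv]
  · rw [hout v hv, hyy₁ p mem_descendants_self, hxy₁, hx'p, one_mul]

end DeviationExtension

open DeviationExtension in
/-- assume every leaf of `T` is a variable node (equivalently, every
check node of `T` has at least one child variable node).  Let `p` be a variable node
and `T_p` the subtree consisting of `p` and all of its descendants, rooted at `p`.
Then every minimal deviation `x'` of `T_p` extends to a minimal deviation `x` of `T`,
i.e. `x` agrees with `x'` on every variable node of `T_p`. -/
theorem minimal_deviation_of_subtree_extends {V : Type} [Fintype V]
    (T : SimpleGraph V) [DecidableRel T.Adj] (hT : T.IsTree)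
    (P : Set V) (hbip : ∀ u v, T.Adj u v → (u ∈ P ↔ v ∉ P))
    (n : V) (hn : n ∈ P)
    (hleaf : ∀ q, q ∉ P → ∃ v, IsChild T n q v ∧ v ∈ P)
    (p : V) (hp : p ∈ P)
    (x' : V → ZMod 2)
    (hx' : IsMinimalDeviationOn T P (Descendants T n p) p x') :
    ∃ x, IsMinimalDeviationOn T P Set.univ n x ∧
      ∀ v ∈ P, v ∈ Descendants T n p → x v = x' v := by
  obtain ⟨c, hc⟩ :=
    exists_isChildChoice hT.connected (fun q hq => (hleaf q hq).imp fun _ => And.left) hp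
  have hpm := marked_self hT hbip hn hp hc
  refine ⟨extension T P n p c x', ⟨?_, ?_, fun y hy hcov hy0 => ?_⟩, fun v _ hv => ?_⟩
  · exact isCodewordOn_extension hT hbip hn hp hc hpm hx'.1 hx'.2.1
  · exact extension_root hT.connected hx'.2.1 hpm
  · exact eq_extension_of_covers hT hp hc hpm hx' hy hcov hy0
  · exact extension_of_mem hv
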